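/- Let p > q be primes with p ≡ 1 (mod q) and g of order q mod p. For each μ with 1 < μ ≤ q, define on A = ℤ_p × ℤ_q the operations (n,m) + (s,t) = (n + g^m s, m+t) and (n,m) ∘ (s,t) = (g^t n + g^{μm} s, m+t). Then each A_μ = (A,+,∘) is a skew brace with additive group ℤ_p ⋊_g ℤ_q whose λ map is injective (ker λ = 0), and these give exactly q-1 isomorphism classes of such skew braces. -/

import Mathlib

/-- `(op, e, inv)` is a group structure on `A`. -/
def IsGroupOp {A : Type*} (op : A → A → A) (e : A) (inv : A → A) : Prop :=
  (∀ a b c, op (op a b) c = op a (op b c)) ∧ (∀ a, op e a = a) ∧ (∀ a, op a e = a) ∧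
  (∀ a, op (inv a) a = e) ∧ (∀ a, op a (inv a) = e)

/-- `(A, add, mul)` is a skew left brace: both operations are group operations and
`a ∘ (b + c) = (a ∘ b - a) + a ∘ c`. -/
def IsSkewBrace {A : Type*} (add : A → A → A) (zero : A) (neg : A → A)
    (mul : A → A → A) (one : A) (inv : A → A) : Prop :=
  IsGroupOp add zero neg ∧ IsGroupOp mul one inv ∧
  ∀ a b c, mul a (add b c) = add (add (mul a b) (neg a)) (mul a c)

section

variable (p q : ℕ) (g : ZMod p)

/-- The addition `(n,m) + (s,t) = (n + g^m s, m+t)` of `M = ℤ_p ⋊_g ℤ_q`. -/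
def mAdd (x y : ZMod p × ZMod q) : ZMod p × ZMod q :=
  (x.1 + g ^ x.2.val * y.1, x.2 + y.2)

/-- The negation of `M = ℤ_p ⋊_g ℤ_q`. -/
def mNeg (x : ZMod p × ZMod q) : ZMod p × ZMod q :=
  (-(g ^ (q - x.2.val) * x.1), -x.2)

/-- The circle operation `(n,m) ∘ (s,t) = (g^t n + g^{μm} s, m+t)` of `A_μ`. -/
def muMul (μ : ℕ) (x y : ZMod p × ZMod q) : ZMod p × ZMod q :=
  (g ^ y.2.val * x.1 + g ^ (μ * x.2.val) * y.1, x.2 + y.2)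

/-- The inverse for the circle operation of `A_μ`. -/
def muInv (μ : ℕ) (x : ZMod p × ZMod q) : ZMod p × ZMod q :=
  (-(g ^ ((μ + 1) * (q - x.2.val)) * x.1), -x.2)

/-- The lambda map `λ_a(b) = -a + (a ∘ b)` of `A_μ`. -/
def muLam (μ : ℕ) (a : ZMod p × ZMod q) : ZMod p × ZMod q → ZMod p × ZMod q :=
  fun b => mAdd p q g (mNeg p q g a) (muMul p q g μ a b)

end

/-!
The λ-map of a skew brace with additive group `M = ℤ_p ⋊_g ℤ_q` takes values in `Aut M`, and
every automorphism of `M` is `(x, m) ↦ (a x + b (g^m - 1), m)` with `a ≠ 0`. So λ is recorded by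
two functions `α, c : M → ℤ_p` obeying the composition law of the affine group of `ℤ_p`, and
`ker λ = 0` makes `a ↦ (α a, c a)` injective. Right cancellation forces `α = 1` on `ℤ_p × 0`;
then `α (n, m) = g^{νm}` for some `0 < ν < q` (`ν = 0` would make `c : M → ℤ_p` injective) and
`c (n, m) = g^{-m} n + γ m`, where `γ` is a twisted 1-cocycle on `ℤ_q`. Every such cocycle is a
coboundary `γ m = c₀ (g^{-m} - g^{νm})`, and the automorphism `(x, m) ↦ (x - c₀ (g^m - 1), m)`
identifies the brace with `A_{ν+1}`. Different `μ` are separated by `g^μ`, the first coordinate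
of `(0,1) ∘ (1,0)`, which every additive automorphism only rescales.
-/

open Function

namespace IsGroupOp

variable {A B : Type*} {op : A → A → A} {e : A} {inv : A → A}

theorem left_cancel (h : IsGroupOp op e inv) {a b c : A} (hbc : op a b = op a c) : b = c := by
  simpa only [← h.1, h.2.2.2.1, h.2.1] using congrArg (op (inv a)) hbc

theorem right_cancel (h : IsGroupOp op e inv) {a b c : A} (hbc : op b a = op c a) : b = c := by
  simpa only [h.1, h.2.2.2.2, h.2.2.1] using congrArg (fun x => op x (inv a)) hbc

variable {op' : B → B → B} {e' : B} {inv' : B → B} {f : A → B}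

theorem map_unit (h : IsGroupOp op e inv) (h' : IsGroupOp op' e' inv')
    (hf : ∀ a b, f (op a b) = op' (f a) (f b)) : f e = e' :=
  h'.left_cancel (a := f e) (by rw [← hf, h.2.1, h'.2.2.1])

theorem map_inv (h : IsGroupOp op e inv) (h' : IsGroupOp op' e' inv')
    (hf : ∀ a b, f (op a b) = op' (f a) (f b)) (a : A) : f (inv a) = inv' (f a) :=
  h'.left_cancel (a := f a) (by rw [← hf, h.2.2.2.2, map_unit h h' hf, h'.2.2.2.2])

end IsGroupOp

def braceLam {A : Type*} (add : A → A → A) (neg : A → A) (mul : A → A → A) (a b : A) : A :=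
  add (neg a) (mul a b)

namespace IsSkewBrace

variable {A B : Type*} {add : A → A → A} {zero : A} {neg : A → A} {mul : A → A → A} {one : A}
  {inv : A → A}

theorem add_braceLam (h : IsSkewBrace add zero neg mul one inv) (a b : A) :
    add a (braceLam add neg mul a b) = mul a b := by
  rw [braceLam, ← h.1.1, h.1.2.2.2.2, h.1.2.1]

theorem mul_zero (h : IsSkewBrace add zero neg mul one inv) (a : A) : mul a zero = a := by
  have hzz := h.2.2 a zero zero
  rw [h.1.2.1] at hzz
  have hdiff : add (mul a zero) (neg a) = zero :=
    h.1.right_cancel (a := mul a zero) (by rw [← hzz, h.1.2.1])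
  exact h.1.right_cancel (a := neg a) (by rw [hdiff, h.1.2.2.2.2])

theorem one_eq_zero (h : IsSkewBrace add zero neg mul one inv) : one = zero :=
  (h.mul_zero one).symm.trans (h.2.1.2.1 zero)

theorem braceLam_add (h : IsSkewBrace add zero neg mul one inv) (a b c : A) :
    braceLam add neg mul a (add b c) =
      add (braceLam add neg mul a b) (braceLam add neg mul a c) := by
  simp only [braceLam, h.2.2, h.1.1]

theorem braceLam_injective (h : IsSkewBrace add zero neg mul one inv) (a : A) :
    Injective (braceLam add neg mul a) :=
  fun _ _ hbc => h.2.1.left_cancel (h.1.left_cancel hbc)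

theorem braceLam_mul (h : IsSkewBrace add zero neg mul one inv) (a b c : A) :
    braceLam add neg mul (mul a b) c = braceLam add neg mul a (braceLam add neg mul b c) := by
  refine h.1.left_cancel (a := mul a b) ?_
  rw [h.add_braceLam, h.2.1.1, ← h.add_braceLam b c, h.2.2, h.1.1]
  rfl

theorem braceLam_one (h : IsSkewBrace add zero neg mul one inv) (b : A) :
    braceLam add neg mul one b = b := by
  have hneg : neg zero = zero := by simpa only [h.1.2.1] using h.1.2.2.2.2 zero
  rw [braceLam, h.2.1.2.1, h.one_eq_zero, hneg, h.1.2.1]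

theorem eq_of_braceLam_eq (h : IsSkewBrace add zero neg mul one inv)
    (hker : ∀ a, (∀ b, mul a b = add a b) → a = zero) {a a' : A}
    (hlam : ∀ b, braceLam add neg mul a b = braceLam add neg mul a' b) : a = a' := by
  have hunit : mul (inv a') a = one := by
    rw [h.one_eq_zero]
    refine hker _ fun b => ?_
    rw [← h.add_braceLam, h.braceLam_mul, hlam, ← h.braceLam_mul, h.2.1.2.2.2.1,
      h.braceLam_one]
  exact h.2.1.left_cancel (hunit.trans (h.2.1.2.2.2.1 a').symm)

theorem transport (h : IsSkewBrace add zero neg mul one inv) {add' : B → B → B} {zero' : B}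
    {neg' : B → B} (h' : IsGroupOp add' zero' neg') (e : A ≃ B)
    (he : ∀ a b, e (add a b) = add' (e a) (e b)) :
    IsSkewBrace add' zero' neg' (fun x y => e (mul (e.symm x) (e.symm y))) (e one)
      (fun x => e (inv (e.symm x))) := by
  have hneg := h.1.map_inv h' he
  have hsymm : ∀ a b, e.symm (add' (e a) (e b)) = add a b := fun a b => by
    rw [← he, e.symm_apply_apply]
  refine ⟨h', ⟨?_, ?_, ?_, ?_, ?_⟩, ?_⟩ <;> simp only [e.surjective.forall, e.symm_apply_apply]
  · intro a b c; rw [h.2.1.1]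
  · intro a; rw [h.2.1.2.1]
  · intro a; rw [h.2.1.2.2.1]
  · intro a; rw [h.2.1.2.2.2.1]
  · intro a; rw [h.2.1.2.2.2.2]
  · intro a b c; rw [hsymm, h.2.2, he, he, hneg]

end IsSkewBrace

def powZMod {G : Type*} [Monoid G] {q : ℕ} (g : G) (m : ZMod q) : G := g ^ m.val

section powZMod

variable {q : ℕ}

section CommMonoid

variable {G : Type*} [CommMonoid G] {g : G}

@[simp]
theorem powZMod_zero : powZMod g (0 : ZMod q) = 1 := by
  rw [powZMod, ZMod.val_zero, pow_zero]

theorem powZMod_natCast (hg : g ^ q = 1) (n : ℕ) : powZMod g (n : ZMod q) = g ^ n := by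
  rw [powZMod, ZMod.val_natCast, ← pow_eq_pow_mod n hg]

theorem powZMod_one (hg : g ^ q = 1) : powZMod g (1 : ZMod q) = g := by
  simpa using powZMod_natCast hg 1

variable [NeZero q]

theorem powZMod_add (hg : g ^ q = 1) (m n : ZMod q) :
    powZMod g (m + n) = powZMod g m * powZMod g n := by
  rw [powZMod, ZMod.val_add, ← pow_eq_pow_mod _ hg, pow_add, powZMod, powZMod]

theorem powZMod_pow (hg : g ^ q = 1) (n : ℕ) (m : ZMod q) :
    powZMod g m ^ n = powZMod g ((n : ZMod q) * m) := by
  rw [powZMod, ← pow_mul, ← powZMod_natCast hg]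
  push_cast [ZMod.natCast_zmod_val]
  rw [mul_comm]

theorem powZMod_injective (hg : IsPrimitiveRoot g q) : Injective (powZMod g : ZMod q → G) :=
  fun m n h => ZMod.val_injective q (hg.pow_inj (ZMod.val_lt m) (ZMod.val_lt n) h)

end CommMonoid

section Field

variable {K : Type*} [Field K] {g : K} [NeZero q]

theorem powZMod_ne_zero (hg : g ^ q = 1) (m : ZMod q) : powZMod g m ≠ 0 := by
  refine pow_ne_zero _ fun hg0 => ?_
  simp [hg0, zero_pow (NeZero.ne q)] at hg

theorem powZMod_neg (hg : g ^ q = 1) (m : ZMod q) : powZMod g (-m) = (powZMod g m)⁻¹ :=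
  eq_inv_of_mul_eq_one_left (by rw [← powZMod_add hg, neg_add_cancel, powZMod_zero])

theorem pow_sub_val (hg : g ^ q = 1) (m : ZMod q) : g ^ (q - m.val) = (powZMod g m)⁻¹ :=
  eq_inv_of_mul_eq_one_left <| by
    rw [powZMod, ← pow_add, Nat.sub_add_cancel (ZMod.val_le m), hg]

end Field

end powZMod

def mAut {p q : ℕ} (g a b : ZMod p) (x : ZMod p × ZMod q) : ZMod p × ZMod q :=
  (a * x.1 + b * (powZMod g x.2 - 1), x.2)

variable {p q : ℕ} {g : ZMod p}

theorem mAdd_eq (x y : ZMod p × ZMod q) :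
    mAdd p q g x y = (x.1 + powZMod g x.2 * y.1, x.2 + y.2) := rfl

theorem mAdd_mk_zero (x y : ZMod p) :
    mAdd p q g (x, 0) (y, 0) = (x + y, 0) := by
  ext <;> simp [mAdd_eq]

theorem muMul_eq (μ : ℕ) (x y : ZMod p × ZMod q) :
    muMul p q g μ x y = (powZMod g y.2 * x.1 + powZMod g x.2 ^ μ * y.1, x.2 + y.2) := by
  rw [muMul, pow_mul']
  rfl

section Formulas

variable [Fact p.Prime] [NeZero q]

theorem mNeg_eq (hg : g ^ q = 1) (x : ZMod p × ZMod q) :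
    mNeg p q g x = (-((powZMod g x.2)⁻¹ * x.1), -x.2) := by
  rw [mNeg, pow_sub_val hg]

theorem muInv_eq (hg : g ^ q = 1) (μ : ℕ) (x : ZMod p × ZMod q) :
    muInv p q g μ x = (-((powZMod g x.2)⁻¹ ^ (μ + 1) * x.1), -x.2) := by
  rw [muInv, pow_mul', pow_sub_val hg]

theorem mAdd_isGroupOp (hg : g ^ q = 1) : IsGroupOp (mAdd p q g) 0 (mNeg p q g) := by
  have hu := powZMod_ne_zero (g := g) hg
  refine ⟨fun a b c => ?_, fun a => ?_, fun a => ?_, fun a => ?_, fun a => ?_⟩ <;>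
    ext <;>
    simp only [mAdd_eq, mNeg_eq hg, powZMod_add hg, powZMod_neg hg, Prod.fst_zero,
      Prod.snd_zero, powZMod_zero] <;>
    (try field_simp [hu]) <;> ring

theorem muMul_isGroupOp (hg : g ^ q = 1) (μ : ℕ) :
    IsGroupOp (muMul p q g μ) 0 (muInv p q g μ) := by
  have hu := powZMod_ne_zero (g := g) hg
  refine ⟨fun a b c => ?_, fun a => ?_, fun a => ?_, fun a => ?_, fun a => ?_⟩ <;>
    ext <;>
    simp only [muMul_eq, muInv_eq hg, powZMod_add hg, powZMod_neg hg, inv_pow, Prod.fst_zero,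
      Prod.snd_zero, powZMod_zero] <;>
    (try field_simp [hu]) <;> ring

theorem muMul_mAdd (hg : g ^ q = 1) (μ : ℕ) (a b c : ZMod p × ZMod q) :
    muMul p q g μ a (mAdd p q g b c) =
      mAdd p q g (mAdd p q g (muMul p q g μ a b) (mNeg p q g a)) (muMul p q g μ a c) := by
  have hu := powZMod_ne_zero (g := g) hg
  ext <;>
    simp only [muMul_eq, mAdd_eq, mNeg_eq hg, powZMod_add hg, powZMod_neg hg] <;>
    (try field_simp [hu]) <;> ring

theorem muLam_eq (hg : g ^ q = 1) (μ : ℕ) (a : ZMod p × ZMod q) :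
    muLam p q g μ a =
      mAut g ((powZMod g a.2)⁻¹ * powZMod g a.2 ^ μ) ((powZMod g a.2)⁻¹ * a.1) := by
  have hu := powZMod_ne_zero (g := g) hg
  ext x <;>
    simp only [muLam, mAut, muMul_eq, mAdd_eq, mNeg_eq hg, powZMod_neg hg] <;>
    (try field_simp [hu]) <;> ring

end Formulas

section mAut

theorem mAut_mAut (a b a' b' : ZMod p) (x : ZMod p × ZMod q) :
    mAut g a b (mAut g a' b' x) = mAut g (a * a') (a * b' + b) x := by
  ext
  · simp only [mAut]; ring
  · rfl

theorem mAut_one_zero (x : ZMod p × ZMod q) : mAut g 1 0 x = x := by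
  ext <;> simp [mAut]

theorem mAut_mk_zero (a b x : ZMod p) : mAut g a b ((x, 0) : ZMod p × ZMod q) = (a * x, 0) := by
  ext <;> simp [mAut]

theorem mAut_zero (a b : ZMod p) : mAut g a b (0 : ZMod p × ZMod q) = 0 := by
  rw [← Prod.mk_zero_zero, mAut_mk_zero, mul_zero]

theorem mAut_zero_one (hg : g ^ q = 1) (a b : ZMod p) :
    mAut g a b ((0, 1) : ZMod p × ZMod q) = (b * (g - 1), 1) := by
  ext <;> simp [mAut, powZMod_one hg]

theorem mAut_mAdd [NeZero q] (hg : g ^ q = 1) (a b : ZMod p) (x y : ZMod p × ZMod q) :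
    mAut g a b (mAdd p q g x y) = mAdd p q g (mAut g a b x) (mAut g a b y) := by
  ext
  · simp only [mAut, mAdd_eq, powZMod_add hg]; ring
  · rfl

theorem mAut_inj [Fact p.Prime] (hg : g ^ q = 1) (hg1 : g ≠ 1) {a b a' b' : ZMod p} :
    (∀ x : ZMod p × ZMod q, mAut g a b x = mAut g a' b' x) ↔ a = a' ∧ b = b' := by
  refine ⟨fun h => ⟨?_, ?_⟩, fun h x => by rw [h.1, h.2]⟩
  · simpa [mAut_mk_zero] using congrArg Prod.fst (h (1, 0))
  · have := congrArg Prod.fst (h (0, 1))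
    rw [mAut_zero_one hg, mAut_zero_one hg] at this
    exact mul_right_cancel₀ (sub_ne_zero.mpr hg1) this

def mAutOneEquiv (g c : ZMod p) : (ZMod p × ZMod q) ≃ (ZMod p × ZMod q) where
  toFun := mAut g 1 c
  invFun := mAut g 1 (-c)
  left_inv x := by simp [mAut_mAut, mAut_one_zero]
  right_inv x := by simp [mAut_mAut, mAut_one_zero]

end mAut

theorem ZMod.map_eq_mul_map_one {n : ℕ} [NeZero n] {f : ZMod n → ZMod n}
    (hf : ∀ x y, f (x + y) = f x + f y) (x : ZMod n) : f x = x * f 1 := by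
  simpa [ZMod.natCast_zmod_val] using map_nsmul (AddMonoidHom.mk' f hf) x.val 1

theorem ZMod.map_eq_zero_of_natCast_ne_zero {n m : ℕ} [NeZero n] [Fact m.Prime]
    {f : ZMod n → ZMod m} (hf : ∀ x y, f (x + y) = f x + f y) (hn : (n : ZMod m) ≠ 0)
    (x : ZMod n) : f x = 0 := by
  have h1 : f 1 = 0 := by
    have := map_nsmul (AddMonoidHom.mk' f hf) n 1
    simp only [AddMonoidHom.mk'_apply, nsmul_eq_mul, mul_one, ZMod.natCast_self] at this
    rw [show f 0 = 0 from (AddMonoidHom.mk' f hf).map_zero] at this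
    exact (mul_eq_zero.mp this.symm).resolve_left hn
  have := map_nsmul (AddMonoidHom.mk' f hf) x.val 1
  simp only [AddMonoidHom.mk'_apply, nsmul_eq_mul, mul_one, ZMod.natCast_zmod_val, h1] at this
  simpa using this

section Additive

variable [Fact p.Prime] [Fact q.Prime] {f : ZMod p × ZMod q → ZMod p × ZMod q}

theorem map_mk_zero_of_mAdd (hpq : (p : ZMod q) ≠ 0)
    (hf : ∀ x y, f (mAdd p q g x y) = mAdd p q g (f x) (f y)) (x : ZMod p) :
    f (x, 0) = ((f (1, 0)).1 * x, 0) := by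
  have hsnd : ∀ x : ZMod p, (f (x, 0)).2 = 0 :=
    ZMod.map_eq_zero_of_natCast_ne_zero (f := fun x => (f (x, 0)).2)
      (fun x y => by rw [← mAdd_mk_zero, hf]; rfl) hpq
  have hfst : ∀ x y : ZMod p, (f (x + y, 0)).1 = (f (x, 0)).1 + (f (y, 0)).1 := fun x y => by
    rw [← mAdd_mk_zero, hf, mAdd_eq, hsnd, powZMod_zero, one_mul]
  ext
  · rw [ZMod.map_eq_mul_map_one (f := fun x => (f (x, 0)).1) hfst x, mul_comm]
  · exact hsnd x

theorem map_zero_mk_of_mAdd (hg : g ^ q = 1) (hg1 : g ≠ 1)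
    (hf : ∀ x y, f (mAdd p q g x y) = mAdd p q g (f x) (f y)) (hf0 : f 0 = 0)
    (h01 : (f (0, 1)).2 = 1) (m : ZMod q) :
    f (0, m) = ((f (0, 1)).1 / (g - 1) * (powZMod g m - 1), m) := by
  have hg1' : g - 1 ≠ 0 := sub_ne_zero.mpr hg1
  have hnat (n : ℕ) : f (0, n) = ((f (0, 1)).1 / (g - 1) * (g ^ n - 1), (n : ZMod q)) := by
    induction n with
    | zero => simpa [← Prod.mk_zero_zero] using hf0
    | succ n ih =>
      have hsplit : ((0 : ZMod p), ((n + 1 : ℕ) : ZMod q)) = mAdd p q g (0, n) (0, 1) := by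
        ext <;> simp [mAdd_eq]
      rw [hsplit, hf, ih]
      ext
      · simp only [mAdd_eq, powZMod_natCast hg]
        field_simp
        ring
      · simp [mAdd_eq, h01]
  rw [← ZMod.natCast_zmod_val m, hnat, powZMod_natCast hg]

theorem exists_eq_mAut (hg : IsPrimitiveRoot g q) (hpq : (p : ZMod q) ≠ 0)
    (hf : ∀ x y, f (mAdd p q g x y) = mAdd p q g (f x) (f y)) (hinj : Injective f) :
    ∃ a b, a ≠ 0 ∧ ∀ x, f x = mAut g a b x := by
  have hG := mAdd_isGroupOp hg.pow_eq_one
  have hg1 : g ≠ 1 := hg.ne_one (Fact.out : q.Prime).one_lt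
  have hf0 : f 0 = 0 := hG.map_unit hG hf
  have ha : (f (1, 0)).1 ≠ 0 := fun ha => by
    have : f (1, 0) = f 0 := by rw [map_mk_zero_of_mAdd hpq hf, ha, zero_mul, hf0]; rfl
    exact one_ne_zero (congrArg Prod.fst (hinj this))
  have h01 : (f (0, 1)).2 = 1 := by
    have hrel : mAdd p q g (0, 1) (1, 0) = mAdd p q g (g, 0) (0, 1) := by
      ext <;> simp [mAdd_eq, powZMod_one hg.pow_eq_one]
    have := congrArg f hrel
    rw [hf, hf, map_mk_zero_of_mAdd hpq hf g, map_mk_zero_of_mAdd hpq hf 1] at this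
    replace := congrArg Prod.fst this
    simp only [mAdd_eq, powZMod_zero] at this
    refine powZMod_injective hg ?_
    rw [powZMod_one hg.pow_eq_one]
    exact mul_right_cancel₀ ha (by linear_combination this)
  refine ⟨(f (1, 0)).1, (f (0, 1)).1 / (g - 1), ha, fun x => ?_⟩
  rw [show f x = f (mAdd p q g (x.1, 0) (0, x.2)) by congr 1; ext <;> simp [mAdd_eq], hf,
    map_mk_zero_of_mAdd hpq hf, map_zero_mk_of_mAdd hg.pow_eq_one hg1 hf hf0 h01]
  ext <;> simp [mAdd_eq, mAut]

end Additive

theorem ZMod.natCast_inj_of_pos_of_le {q μ μ' : ℕ} (hμ : 0 < μ) (hμq : μ ≤ q) (hμ' : 0 < μ')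
    (hμ'q : μ' ≤ q) : (μ : ZMod q) = μ' ↔ μ = μ' := by
  refine ⟨fun h => ?_, congrArg _⟩
  have hpred : ((μ - 1 : ℕ) : ZMod q) = ((μ' - 1 : ℕ) : ZMod q) := by
    rw [Nat.cast_sub hμ, Nat.cast_sub hμ', h]
  have := ((ZMod.natCast_eq_natCast_iff _ _ _).mp hpred).eq_of_lt_of_lt (by omega) (by omega)
  omega

section Prime

variable [Fact p.Prime] [Fact q.Prime]

theorem muLam_injective (hg : IsPrimitiveRoot g q) {μ : ℕ} (hμ : (μ : ZMod q) ≠ 1) :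
    Injective (muLam p q g μ) := by
  have hg1 : g ≠ 1 := hg.ne_one (Fact.out : q.Prime).one_lt
  have hexp (m : ZMod q) :
      (powZMod g m)⁻¹ * powZMod g m ^ μ = powZMod g (((μ : ZMod q) - 1) * m) := by
    rw [powZMod_pow hg.pow_eq_one, ← powZMod_neg hg.pow_eq_one, ← powZMod_add hg.pow_eq_one]
    ring_nf
  intro a a' h
  obtain ⟨hα, hc⟩ := (mAut_inj hg.pow_eq_one hg1).1 fun x => by
    simpa only [muLam_eq hg.pow_eq_one] using congrFun h x
  rw [hexp, hexp] at hα
  have h2 : a.2 = a'.2 := mul_left_cancel₀ (sub_ne_zero.mpr hμ) (powZMod_injective hg hα)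
  rw [h2] at hc
  exact Prod.ext (mul_left_cancel₀ (inv_ne_zero (powZMod_ne_zero hg.pow_eq_one _)) hc) h2

theorem natCast_eq_of_mAdd_muMul_hom (hg : IsPrimitiveRoot g q) (hpq : (p : ZMod q) ≠ 0)
    {μ μ' : ℕ} {f : ZMod p × ZMod q → ZMod p × ZMod q}
    (hadd : ∀ a b, f (mAdd p q g a b) = mAdd p q g (f a) (f b)) (hinj : Injective f)
    (hmul : ∀ a b, f (muMul p q g μ a b) = muMul p q g μ' (f a) (f b)) :
    (μ : ZMod q) = μ' := by
  obtain ⟨a, b, ha, hf⟩ := exists_eq_mAut hg hpq hadd hinj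
  have := congrArg Prod.fst (hmul (0, 1) (1, 0))
  simp only [hf, muMul_eq, mAut, powZMod_zero, add_zero] at this
  have key : powZMod g 1 ^ μ = powZMod g 1 ^ μ' :=
    mul_left_cancel₀ ha (by linear_combination this)
  rw [powZMod_pow hg.pow_eq_one, powZMod_pow hg.pow_eq_one] at key
  simpa using powZMod_injective hg key

end Prime

theorem exists_eq_coboundary_of_cocycle [Fact p.Prime] [NeZero q] (hg : g ^ q = 1)
    (hq : (q : ZMod p) ≠ 0) {ν : ℕ} {γ : ZMod q → ZMod p}
    (hγ : ∀ m m', γ (m + m') = powZMod g m ^ ν * γ m' + (powZMod g m')⁻¹ * γ m) :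
    ∃ c₀, ∀ m, γ m = c₀ * ((powZMod g m)⁻¹ - powZMod g m ^ ν) := by
  have hu := powZMod_ne_zero hg
  by_cases hdeg : g ^ ν = g⁻¹
  · have hpow (m : ZMod q) : powZMod g m ^ ν = (powZMod g m)⁻¹ := by
      rw [powZMod, ← pow_mul, mul_comm, pow_mul, hdeg, inv_pow]
    -- `m ↦ g ^ m * γ m` is then additive, hence zero since `q` is invertible in `ZMod p`
    have hadd (m m' : ZMod q) : powZMod g (m + m') * γ (m + m') =
        powZMod g m * γ m + powZMod g m' * γ m' := by
      rw [hγ, hpow, powZMod_add hg]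
      field_simp [hu m, hu m']
      ring
    refine ⟨0, fun m => ?_⟩
    have := ZMod.map_eq_zero_of_natCast_ne_zero (f := fun m => powZMod g m * γ m) hadd hq m
    simpa [hu m] using this
  · have hden : g⁻¹ - g ^ ν ≠ 0 := sub_ne_zero.mpr (Ne.symm hdeg)
    refine ⟨γ 1 / (g⁻¹ - g ^ ν), fun m => ?_⟩
    have hm1 := hγ m 1
    rw [add_comm, hγ, powZMod_one hg] at hm1
    rw [div_mul_eq_mul_div, eq_div_iff hden]
    linear_combination -hm1

/-- `α a, c a` are the coordinates of `λ_a = mAut g (α a) (c a)` in the affine group of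
`ZMod p`. -/
structure IsAffineLambda (g : ZMod p)
    (mul : ZMod p × ZMod q → ZMod p × ZMod q → ZMod p × ZMod q)
    (α c : ZMod p × ZMod q → ZMod p) : Prop where
  mul_eq : ∀ a b, mul a b = mAdd p q g a (mAut g (α a) (c a) b)
  α_ne_zero : ∀ a, α a ≠ 0
  α_mul : ∀ a b, α (mul a b) = α a * α b
  c_mul : ∀ a b, c (mul a b) = α a * c b + c a
  injective : ∀ a a', α a = α a' → c a = c a' → a = a'

theorem IsSkewBrace.exists_isAffineLambda [Fact p.Prime] [Fact q.Prime]
    (hg : IsPrimitiveRoot g q) (hpq : (p : ZMod q) ≠ 0)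
    {mul : ZMod p × ZMod q → ZMod p × ZMod q → ZMod p × ZMod q}
    {one : ZMod p × ZMod q} {inv : ZMod p × ZMod q → ZMod p × ZMod q}
    (h : IsSkewBrace (mAdd p q g) 0 (mNeg p q g) mul one inv)
    (hker : ∀ a, (∀ b, mul a b = mAdd p q g a b) → a = 0) :
    ∃ α c, IsAffineLambda g mul α c := by
  have hg1 : g ≠ 1 := hg.ne_one (Fact.out : q.Prime).one_lt
  choose α c hα hlam using fun a =>
    exists_eq_mAut hg hpq (h.braceLam_add a) (h.braceLam_injective a)
  have hmul (a b) : α (mul a b) = α a * α b ∧ c (mul a b) = α a * c b + c a :=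
    (mAut_inj hg.pow_eq_one hg1).1 fun x => by
      rw [← mAut_mAut, ← hlam, ← hlam, ← hlam, h.braceLam_mul]
  refine ⟨α, c, fun a b => ?_, hα, fun a b => (hmul a b).1, fun a b => (hmul a b).2,
    fun a a' hαa hca => h.eq_of_braceLam_eq hker fun b => ?_⟩
  · rw [← hlam, h.add_braceLam]
  · rw [hlam, hlam, hαa, hca]

namespace IsAffineLambda

variable {mul : ZMod p × ZMod q → ZMod p × ZMod q → ZMod p × ZMod q}
  {α c : ZMod p × ZMod q → ZMod p}

theorem snd_mul (h : IsAffineLambda g mul α c) (a b : ZMod p × ZMod q) :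
    (mul a b).2 = a.2 + b.2 := by
  rw [h.mul_eq]
  rfl

theorem mul_zero_zero (h : IsAffineLambda g mul α c) : mul 0 0 = 0 := by
  rw [h.mul_eq, mAut_zero]
  ext <;> simp [mAdd_eq]

variable [Fact p.Prime]

theorem α_zero (h : IsAffineLambda g mul α c) : α 0 = 1 := by
  have := h.α_mul 0 0
  rw [h.mul_zero_zero] at this
  exact (mul_eq_left₀ (h.α_ne_zero 0)).mp this.symm

theorem c_zero (h : IsAffineLambda g mul α c) : c 0 = 0 := by
  simpa [h.mul_zero_zero, h.α_zero] using h.c_mul 0 0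

theorem zero_mul (h : IsAffineLambda g mul α c) (b : ZMod p × ZMod q) : mul 0 b = b := by
  rw [h.mul_eq, h.α_zero, h.c_zero, mAut_one_zero]
  ext <;> simp [mAdd_eq]

theorem mul_right_cancel (h : IsAffineLambda g mul α c) {a a' b : ZMod p × ZMod q}
    (hab : mul a b = mul a' b) : a = a' := by
  have hα : α a = α a' :=
    mul_right_cancel₀ (h.α_ne_zero b) (by rw [← h.α_mul, ← h.α_mul, hab])
  refine h.injective a a' hα ?_
  simpa [h.c_mul, hα] using congrArg c hab

-- Otherwise left multiplication by `(x, 0)` would fix a point of `ZMod p × {0}`.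
theorem α_mk_zero (h : IsAffineLambda g mul α c) (x : ZMod p) : α (x, 0) = 1 := by
  by_contra hne
  have hfix : mul (x, 0) (x / (1 - α (x, 0)), 0) = mul 0 (x / (1 - α (x, 0)), 0) := by
    rw [h.mul_eq, mAut_mk_zero, mAdd_mk_zero, h.zero_mul]
    congr 1
    field_simp [sub_ne_zero.mpr (Ne.symm hne)]
    ring
  rw [h.mul_right_cancel hfix, h.α_zero] at hne
  exact hne rfl

theorem c_mk_zero (h : IsAffineLambda g mul α c) (x : ZMod p) : c (x, 0) = x * c (1, 0) := by
  have hmul (x y : ZMod p) : mul (x, 0) (y, 0) = (x + y, 0) := by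
    rw [h.mul_eq, mAut_mk_zero, h.α_mk_zero, one_mul, mAdd_mk_zero]
  refine ZMod.map_eq_mul_map_one (f := fun x => c (x, 0)) (fun x y => ?_) x
  rw [← hmul, h.c_mul, h.α_mk_zero, one_mul, add_comm]

variable [NeZero q]

theorem eq_mul_zero_mk (h : IsAffineLambda g mul α c) (hg : g ^ q = 1) (a : ZMod p × ZMod q) :
    a = mul (0, a.2) ((powZMod g a.2 * α (0, a.2))⁻¹ * a.1, 0) := by
  have := powZMod_ne_zero hg a.2
  have := h.α_ne_zero (0, a.2)
  rw [h.mul_eq, mAut_mk_zero]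
  ext
  · simp only [mAdd_eq]
    field_simp
    ring
  · simp [mAdd_eq]

theorem α_eq (h : IsAffineLambda g mul α c) (hg : g ^ q = 1) (a : ZMod p × ZMod q) :
    α a = α (0, a.2) := by
  conv_lhs => rw [h.eq_mul_zero_mk hg a]
  rw [h.α_mul, h.α_mk_zero, mul_one]

theorem c_eq (h : IsAffineLambda g mul α c) (hg : g ^ q = 1) (a : ZMod p × ZMod q) :
    c a = c (1, 0) * (powZMod g a.2)⁻¹ * a.1 + c (0, a.2) := by
  have := h.α_ne_zero (0, a.2)
  conv_lhs => rw [h.eq_mul_zero_mk hg a]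
  rw [h.c_mul, h.c_mk_zero]
  field_simp

theorem c_one_zero (h : IsAffineLambda g mul α c) (hg : g ^ q = 1) (hg1 : g ≠ 1) :
    c (1, 0) = 1 := by
  have hβ : c (1, 0) ≠ 0 := fun hβ => one_ne_zero <| congrArg Prod.fst <|
    h.injective (1, 0) 0 (by rw [h.α_mk_zero, h.α_zero]) (by rw [hβ, h.c_zero])
  have h10 : mul (1, 0) (0, 1) = (1 + c (1, 0) * (g - 1), 1) := by
    rw [h.mul_eq, mAut_zero_one hg]
    ext <;> simp [mAdd_eq]
  have := h.c_mul (1, 0) (0, 1)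
  rw [h10, h.c_eq hg, h.α_mk_zero, powZMod_one hg] at this
  have hg0 : g ≠ 0 := powZMod_one hg ▸ powZMod_ne_zero hg 1
  field_simp at this
  have key : c (1, 0) * (g - 1) * (c (1, 0) - 1) = 0 := by linear_combination this
  simpa [hβ, sub_ne_zero.mpr hg1, sub_eq_zero] using key

theorem α_zero_mk_add (h : IsAffineLambda g mul α c) (hg : g ^ q = 1) (m m' : ZMod q) :
    α (0, m + m') = α (0, m) * α (0, m') := by
  rw [← h.α_mul, h.α_eq hg (mul _ _), h.snd_mul]

theorem c_zero_mk_add (h : IsAffineLambda g mul α c) (hg : g ^ q = 1) (hg1 : g ≠ 1)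
    (m m' : ZMod q) :
    c (0, m + m') = α (0, m) * c (0, m') + (powZMod g m')⁻¹ * c (0, m) := by
  have hm : mul (0, m) (0, m') = (powZMod g m * (c (0, m) * (powZMod g m' - 1)), m + m') := by
    rw [h.mul_eq]
    ext <;> simp [mAut, mAdd_eq]
  have := h.c_mul (0, m) (0, m')
  rw [hm, h.c_eq hg, h.c_one_zero hg hg1, powZMod_add hg] at this
  have hu := powZMod_ne_zero hg m
  have hu' := powZMod_ne_zero hg m'
  have hcancel :
      (powZMod g m * powZMod g m')⁻¹ * (powZMod g m * (c (0, m) * (powZMod g m' - 1))) =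
        c (0, m) - (powZMod g m')⁻¹ * c (0, m) := by
    field_simp
  dsimp only at this
  rw [one_mul, hcancel] at this
  linear_combination this

theorem exists_α_zero_mk [Fact q.Prime] (h : IsAffineLambda g mul α c)
    (hg : IsPrimitiveRoot g q) :
    ∃ ν, 0 < ν ∧ ν < q ∧ ∀ m, α (0, m) = powZMod g m ^ ν := by
  let χ : AddChar (ZMod q) (ZMod p) :=
    ⟨fun m => α (0, m), h.α_zero, h.α_zero_mk_add hg.pow_eq_one⟩
  have hχ (m : ZMod q) : α (0, m) = χ 1 ^ m.val := by
    rw [← AddChar.map_nsmul_eq_pow, nsmul_one, ZMod.natCast_zmod_val]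
    rfl
  have hχq : χ 1 ^ q = 1 := by
    rw [← AddChar.map_nsmul_eq_pow, nsmul_one, ZMod.natCast_self, AddChar.map_zero_eq_one]
  obtain ⟨ν, hνq, hν⟩ := hg.eq_pow_of_pow_eq_one hχq
  refine ⟨ν, Nat.pos_of_ne_zero fun hν0 => ?_, hνq, fun m => ?_⟩
  · have hα1 (a : ZMod p × ZMod q) : α a = 1 := by
      rw [h.α_eq hg.pow_eq_one, hχ, ← hν, hν0, pow_zero, one_pow]
    have hinj : Injective c := fun a a' hc => h.injective a a' (by rw [hα1, hα1]) hc
    have hcard := Fintype.card_le_of_injective c hinj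
    simp only [Fintype.card_prod, ZMod.card] at hcard
    have := (Fact.out : q.Prime).two_le
    have := (Fact.out : p.Prime).pos
    nlinarith
  · rw [hχ, ← hν, powZMod, ← pow_mul, ← pow_mul, mul_comm]

theorem exists_muMul_equiv [Fact q.Prime] (h : IsAffineLambda g mul α c)
    (hg : IsPrimitiveRoot g q) (hq : (q : ZMod p) ≠ 0) :
    ∃ μ, 1 < μ ∧ μ ≤ q ∧ ∃ E : (ZMod p × ZMod q) ≃ (ZMod p × ZMod q),
      (∀ a b, E (mAdd p q g a b) = mAdd p q g (E a) (E b)) ∧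
      ∀ a b, E (mul a b) = muMul p q g μ (E a) (E b) := by
  have hg1 : g ≠ 1 := hg.ne_one (Fact.out : q.Prime).one_lt
  obtain ⟨ν, hν0, hνq, hα⟩ := h.exists_α_zero_mk hg
  obtain ⟨c₀, hc₀⟩ := exists_eq_coboundary_of_cocycle hg.pow_eq_one hq (γ := fun m => c (0, m))
    fun m m' => by rw [h.c_zero_mk_add hg.pow_eq_one hg1, hα]
  refine ⟨ν + 1, by omega, by omega, mAutOneEquiv g (-c₀), mAut_mAdd hg.pow_eq_one 1 (-c₀),
    fun a b => ?_⟩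
  show mAut g 1 (-c₀) (mul a b) = muMul p q g (ν + 1) (mAut g 1 (-c₀) a) (mAut g 1 (-c₀) b)
  have hu := powZMod_ne_zero hg.pow_eq_one a.2
  rw [h.mul_eq, h.α_eq hg.pow_eq_one, h.c_eq hg.pow_eq_one, hα, hc₀,
    h.c_one_zero hg.pow_eq_one hg1]
  ext
  · simp only [mAut, mAdd_eq, muMul_eq, powZMod_add hg.pow_eq_one]
    field_simp
    ring
  · simp [mAut, mAdd_eq, muMul_eq]

end IsAffineLambda

theorem exists_muMul_equiv_of_isSkewBrace [Fact p.Prime] [Fact q.Prime]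
    (hg : IsPrimitiveRoot g q) (hpq : (p : ZMod q) ≠ 0) (hqp : (q : ZMod p) ≠ 0) {A : Type*}
    {add : A → A → A} {zero : A} {neg : A → A} {mul : A → A → A} {one : A} {inv : A → A}
    (h : IsSkewBrace add zero neg mul one inv) (e : A ≃ ZMod p × ZMod q)
    (he : ∀ a b, e (add a b) = mAdd p q g (e a) (e b))
    (hker : ∀ a, (∀ b, mul a b = add a b) → a = zero) :
    ∃ μ, 1 < μ ∧ μ ≤ q ∧ ∃ e' : A ≃ ZMod p × ZMod q,
      (∀ a b, e' (add a b) = mAdd p q g (e' a) (e' b)) ∧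
      ∀ a b, e' (mul a b) = muMul p q g μ (e' a) (e' b) := by
  have hG := mAdd_isGroupOp hg.pow_eq_one
  have hker' (x : ZMod p × ZMod q)
      (hx : ∀ y, e (mul (e.symm x) (e.symm y)) = mAdd p q g x y) : x = 0 := by
    have hzero : e.symm x = zero := hker _ fun b => e.injective <| by
      rw [← e.symm_apply_apply b, hx, he, e.apply_symm_apply, e.apply_symm_apply]
    rw [← e.apply_symm_apply x, hzero, h.1.map_unit hG he]
  obtain ⟨α, c, hαc⟩ := (h.transport hG e he).exists_isAffineLambda hg hpq hker'
  obtain ⟨μ, hμ1, hμq, E, hEadd, hEmul⟩ := hαc.exists_muMul_equiv hg hqp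
  refine ⟨μ, hμ1, hμq, e.trans E, fun a b => ?_, fun a b => ?_⟩
  · simp only [Equiv.trans_apply, he, hEadd]
  · simpa using hEmul (e a) (e b)

theorem stmt19_general (p q : ℕ) (hp : p.Prime) (hq : q.Prime) (hlt : q < p)
    (g : ZMod p) (hg : orderOf g = q) :
    (∀ μ : ℕ, 1 < μ → μ ≤ q →
      IsSkewBrace (mAdd p q g) 0 (mNeg p q g) (muMul p q g μ) 0 (muInv p q g μ) ∧
      Function.Injective (muLam p q g μ)) ∧
    (∀ μ μ' : ℕ, 1 < μ → μ ≤ q → 1 < μ' → μ' ≤ q → μ ≠ μ' →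
      ¬∃ e : (ZMod p × ZMod q) ≃ (ZMod p × ZMod q),
        (∀ a b, e (mAdd p q g a b) = mAdd p q g (e a) (e b)) ∧
        (∀ a b, e (muMul p q g μ a b) = muMul p q g μ' (e a) (e b))) ∧
    (∀ (A : Type) (add : A → A → A) (zero : A) (neg : A → A)
        (mul : A → A → A) (one : A) (inv : A → A),
      IsSkewBrace add zero neg mul one inv →
      (∃ e : A ≃ ZMod p × ZMod q, ∀ a b, e (add a b) = mAdd p q g (e a) (e b)) →
      (∀ a : A, (∀ b, mul a b = add a b) → a = zero) →
      ∃ μ : ℕ, 1 < μ ∧ μ ≤ q ∧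
        ∃ e : A ≃ ZMod p × ZMod q,
          (∀ a b, e (add a b) = mAdd p q g (e a) (e b)) ∧
          (∀ a b, e (mul a b) = muMul p q g μ (e a) (e b))) := by
  have := Fact.mk hp
  have := Fact.mk hq
  have hprim : IsPrimitiveRoot g q := hg ▸ IsPrimitiveRoot.orderOf g
  have hgq := hprim.pow_eq_one
  have hpq : (p : ZMod q) ≠ 0 := by
    rw [Ne, ZMod.natCast_eq_zero_iff, Nat.prime_dvd_prime_iff_eq hq hp]
    exact hlt.ne
  have hqp : (q : ZMod p) ≠ 0 := by
    rw [Ne, ZMod.natCast_eq_zero_iff]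
    exact fun hdvd => (Nat.le_of_dvd hq.pos hdvd).not_gt hlt
  refine ⟨fun μ hμ1 hμq => ⟨⟨mAdd_isGroupOp hgq, muMul_isGroupOp hgq μ, muMul_mAdd hgq μ⟩,
    muLam_injective hprim ?_⟩, ?_, ?_⟩
  · rw [← Nat.cast_one, Ne, ZMod.natCast_inj_of_pos_of_le (by omega) hμq one_pos hq.one_lt.le]
    omega
  · rintro μ μ' hμ1 hμq hμ'1 hμ'q hne ⟨e, hadd, hmul⟩
    exact hne ((ZMod.natCast_inj_of_pos_of_le (by omega) hμq (by omega) hμ'q).mp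
      (natCast_eq_of_mAdd_muMul_hom hprim hpq hadd e.injective hmul))
  · rintro A add zero neg mul one inv h ⟨e, he⟩ hker
    exact exists_muMul_equiv_of_isSkewBrace hprim hpq hqp h e he hker

/-- Let `p > q` be primes with `p ≡ 1 (mod q)` and `g` of order `q` mod `p`.  For each
`1 < μ ≤ q`, the operations `(n,m) + (s,t) = (n + g^m s, m+t)` and
`(n,m) ∘ (s,t) = (g^t n + g^{μm} s, m+t)` make `A_μ = (ℤ_p × ℤ_q, +, ∘)` a skew brace
with additive group `ℤ_p ⋊_g ℤ_q` whose `λ` map is injective (`ker λ = 0`); distinct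
values of `μ` give non-isomorphic braces, and every skew brace with additive group
`ℤ_p ⋊_g ℤ_q` and `ker λ = 0` is isomorphic to some `A_μ`: there are exactly `q - 1`
isomorphism classes. -/
theorem stmt19 (p q : ℕ) (hp : p.Prime) (hq : q.Prime) (hlt : q < p)
    (hmod : p % q = 1) (g : ZMod p) (hg : orderOf g = q) :
    (∀ μ : ℕ, 1 < μ → μ ≤ q →
      IsSkewBrace (mAdd p q g) 0 (mNeg p q g) (muMul p q g μ) 0 (muInv p q g μ) ∧
      Function.Injective (muLam p q g μ)) ∧
    (∀ μ μ' : ℕ, 1 < μ → μ ≤ q → 1 < μ' → μ' ≤ q → μ ≠ μ' →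
      ¬∃ e : (ZMod p × ZMod q) ≃ (ZMod p × ZMod q),
        (∀ a b, e (mAdd p q g a b) = mAdd p q g (e a) (e b)) ∧
        (∀ a b, e (muMul p q g μ a b) = muMul p q g μ' (e a) (e b))) ∧
    (∀ (A : Type) (add : A → A → A) (zero : A) (neg : A → A)
        (mul : A → A → A) (one : A) (inv : A → A),
      IsSkewBrace add zero neg mul one inv →
      (∃ e : A ≃ ZMod p × ZMod q, ∀ a b, e (add a b) = mAdd p q g (e a) (e b)) →
      (∀ a : A, (∀ b, mul a b = add a b) → a = zero) →
      ∃ μ : ℕ, 1 < μ ∧ μ ≤ q ∧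
        ∃ e : A ≃ ZMod p × ZMod q,
          (∀ a b, e (add a b) = mAdd p q g (e a) (e b)) ∧
          (∀ a b, e (mul a b) = muMul p q g μ (e a) (e b))) :=
  stmt19_general p q hp hq hlt g hg
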